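/- arXiv:2604.23748 — 4 statements merged into one kernel-verified Lean document; each statement's English description precedes it below -/
import Mathlib

section
/- If P = (v_1, ..., v_p) is a TSP-violating path (i.e., there exists a path on the same node set from v_1 to v_p with strictly smaller total distance), then every TSP-optimal route (a route that is a shortest tour over its visited customers) fails to contain at least one arc of P. Equivalently, the number of arcs of P used by any TSP-optimal route is at most |A(P)| - 1 = p - 2. -/
variable {V : Type*}

/-- The list of arcs (consecutive node pairs) of a node list. -/
def arcsOf (l : List V) : List (V × V) := l.zip l.tail

/-- The length of a path given as a node list: the sum of its arc distances. -/
def plen (d : V → V → ℝ) (l : List V) : ℝ :=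
  ((arcsOf l).map (fun a => d a.1 a.2)).sum

/-- A path is TSP-violating if some path on the same node set with
the same endpoints is strictly shorter. -/
def TSPviolating (d : V → V → ℝ) (P : List V) : Prop :=
  ∃ Q : List V, Q.Perm P ∧ Q.head? = P.head? ∧ Q.getLast? = P.getLast? ∧
    plen d Q < plen d P

/-- Length of the route visiting customers `c` in order,
starting and ending at the depot. -/
def routeLen (d : V → V → ℝ) (depot : V) (c : List V) : ℝ :=
  plen d (depot :: c ++ [depot])

/-- A route (given by its ordered customer list) is TSP-optimal:
no reordering of its customers gives a strictly shorter route. -/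
def TSPopt (d : V → V → ℝ) (depot : V) (c : List V) : Prop :=
  ∀ c' : List V, c'.Perm c → routeLen d depot c ≤ routeLen d depot c'

/-- Arc flow of a set of selected routes: the number of selected routes using arc `a`. -/
def flow [DecidableEq V] (depot : V) (routes : List (List V)) (a : V × V) : ℤ :=
  (routes.map (fun c => ((arcsOf (depot :: c ++ [depot])).count a : ℤ))).sum

/-! If every arc of `P` lay on the route, then `P` would be a contiguous segment of it: a node
other than the depot occurs once on the route, so its predecessor there is forced, and the
inner nodes of `P` are not the depot. Replacing that segment by the shorter reordering with the
same endpoints gives a strictly shorter route through the same customers. Hence the route misses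
one of the `p - 1` arcs of `P`. -/

lemma arcsOf_cons_cons (x y : V) (l : List V) :
    arcsOf (x :: y :: l) = (x, y) :: arcsOf (y :: l) := rfl

lemma length_arcsOf (l : List V) : (arcsOf l).length = l.length - 1 := by
  simp [arcsOf]

lemma isInfix_of_mem_arcsOf {a b : V} : ∀ {l : List V}, (a, b) ∈ arcsOf l → [a, b] <:+: l
  | [] | [_] => by simp [arcsOf]
  | x :: y :: l => by
    rw [arcsOf_cons_cons, List.mem_cons, Prod.mk.injEq]
    rintro (⟨rfl, rfl⟩ | h)
    · exact ⟨[], l, rfl⟩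
    · exact List.infix_cons (isInfix_of_mem_arcsOf h)

lemma arcsOf_append_cons (X : List V) (b : V) (Y : List V) :
    arcsOf (X ++ b :: Y) = arcsOf (X ++ [b]) ++ arcsOf (b :: Y) := by
  induction X with
  | nil => rfl
  | cons x X ih =>
    cases X with
    | nil => rfl
    | cons x' X => simp only [List.cons_append, arcsOf_cons_cons] at ih ⊢; rw [ih]

lemma plen_append_cons (d : V → V → ℝ) (X : List V) (b : V) (Y : List V) :
    plen d (X ++ b :: Y) = plen d (X ++ [b]) + plen d (b :: Y) := by
  rw [plen, plen, plen, arcsOf_append_cons, List.map_append, List.sum_append]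

lemma plen_eq_zero_of_length_le_one (d : V → V → ℝ) {l : List V} (hl : l.length ≤ 1) :
    plen d l = 0 := by
  rcases l with _ | ⟨x, _ | ⟨y, l⟩⟩ <;> simp_all [plen, arcsOf]

lemma plen_splice (d : V → V → ℝ) (X Y : List V) {P : List V} {a b : V}
    (ha : P.head? = some a) (hb : P.getLast? = some b) :
    plen d (X ++ P ++ Y) = plen d (X ++ [a]) + plen d P + plen d (b :: Y) := by
  obtain ⟨P₁, hP₁⟩ := List.head?_eq_some_iff.1 ha
  obtain ⟨P₂, hP₂⟩ := List.getLast?_eq_some_iff.1 hb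
  have hleft : X ++ P ++ Y = X ++ a :: (P₁ ++ Y) := by simp [hP₁]
  have hright : a :: (P₁ ++ Y) = P₂ ++ b :: Y := by simp [← List.cons_append, ← hP₁, hP₂]
  rw [hleft, plen_append_cons d X, hright, plen_append_cons d P₂, ← hP₂, add_assoc]

lemma plen_splice_lt (d : V → V → ℝ) (X Y : List V) {P Q : List V}
    (hhead : Q.head? = P.head?) (hlast : Q.getLast? = P.getLast?) (hlt : plen d Q < plen d P) :
    plen d (X ++ Q ++ Y) < plen d (X ++ P ++ Y) := by
  have hP : P ≠ [] := by
    rintro rfl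
    rw [List.head?_nil, List.head?_eq_none_iff] at hhead
    exact hlt.ne (by rw [hhead])
  obtain ⟨a, ha⟩ := Option.ne_none_iff_exists'.1 (mt List.head?_eq_none_iff.1 hP)
  obtain ⟨b, hb⟩ := Option.ne_none_iff_exists'.1 (mt List.getLast?_eq_none_iff.1 hP)
  rw [plen_splice d X Y ha hb, plen_splice d X Y (hhead.trans ha) (hlast.trans hb)]
  linarith

lemma cons_cons_isInfix [DecidableEq V] {l t : List V} {a b : V} (hb : l.count b ≤ 1)
    (hab : [a, b] <:+: l) (hbt : b :: t <:+: l) : a :: b :: t <:+: l := by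
  obtain ⟨S, U, rfl⟩ := hbt
  obtain ⟨S', U', hl⟩ := hab
  have hbS : b ∉ S ∧ b ∉ t ++ U := by
    simp only [List.append_assoc, List.cons_append, List.count_append, List.count_cons_self] at hb
    exact ⟨List.count_eq_zero.1 (by omega), List.count_eq_zero.1 (by rw [List.count_append]; omega)⟩
  have hsplit : S' ++ [a] ++ b :: U' = S ++ b :: (t ++ U) := by simpa using hl
  obtain ⟨rfl, -, -⟩ := (List.append_cons_inj_of_notMem hbS.1 hbS.2).1 hsplit.symm
  exact ⟨S', U, by simp⟩

lemma cons_cons_isInfix_of_arcsOf_subset [DecidableEq V] {l : List V} {v w : V} {rest : List V}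
    (hinner : ∀ b ∈ (w :: rest).dropLast, l.count b ≤ 1)
    (harcs : arcsOf (v :: w :: rest) ⊆ arcsOf l) : v :: w :: rest <:+: l := by
  induction rest generalizing v w with
  | nil => exact isInfix_of_mem_arcsOf (harcs (by simp [arcsOf]))
  | cons r rest ih =>
    rw [arcsOf_cons_cons, List.cons_subset] at harcs
    rw [List.dropLast_cons_cons, List.forall_mem_cons] at hinner
    exact cons_cons_isInfix hinner.1 (isInfix_of_mem_arcsOf harcs.1) (ih hinner.2 harcs.2)

lemma count_route_le_one [DecidableEq V] {depot b : V} {c : List V} (hc : c.Nodup)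
    (hcdep : depot ∉ c) (hb : depot ≠ b) : (depot :: c ++ [depot]).count b ≤ 1 := by
  rw [List.cons_append, List.count_cons_of_ne hb]
  exact List.nodup_iff_count_le_one.1 (List.nodup_append_comm.1 (List.nodup_cons.2 ⟨hcdep, hc⟩)) b

lemma TSPviolating.two_le_length {d : V → V → ℝ} {P : List V} (hP : TSPviolating d P) :
    2 ≤ P.length := by
  obtain ⟨Q, hQP, -, -, hlt⟩ := hP
  by_contra! hshort
  rw [plen_eq_zero_of_length_le_one d (l := Q) (by rw [hQP.length_eq]; omega),
    plen_eq_zero_of_length_le_one d (l := P) (by omega)] at hlt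
  exact lt_irrefl 0 hlt

lemma TSPopt.routeLen_le {d : V → V → ℝ} {depot : V} {c R : List V} (hopt : TSPopt d depot c)
    (hR : R.Perm (depot :: c ++ [depot])) (hhead : R.head? = some depot)
    (hlast : R.getLast? = some depot) : routeLen d depot c ≤ plen d R := by
  obtain ⟨T, rfl⟩ := List.head?_eq_some_iff.1 hhead
  obtain ⟨y, T, rfl⟩ := List.exists_cons_of_ne_nil (l := T) (by
    rintro rfl
    simpa using hR.length_eq)
  obtain ⟨c', hc'⟩ := List.getLast?_eq_some_iff.1 (List.getLast?_cons_cons ▸ hlast)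
  rw [hc', ← List.cons_append] at hR ⊢
  exact hopt c' ((List.perm_append_right_iff _).1 hR).cons_inv

lemma TSPopt.not_isInfix_of_TSPviolating {d : V → V → ℝ} {depot : V} {c P : List V}
    (hopt : TSPopt d depot c) (hviol : TSPviolating d P) : ¬ P <:+: depot :: c ++ [depot] := by
  rintro ⟨X, Y, hR⟩
  obtain ⟨Q, hQP, hhead, hlast, hlt⟩ := hviol
  have hperm : (X ++ Q ++ Y).Perm (depot :: c ++ [depot]) := by
    rw [← hR]
    simpa only [List.append_assoc] using (hQP.append_right Y).append_left X
  have hhead' : (X ++ Q ++ Y).head? = some depot := by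
    have h : (X ++ P ++ Y).head? = some depot := by rw [hR]; rfl
    simpa only [List.head?_append, hhead] using h
  have hlast' : (X ++ Q ++ Y).getLast? = some depot := by
    have h : (X ++ P ++ Y).getLast? = some depot := by rw [hR, List.getLast?_concat]
    simpa only [List.getLast?_append, hlast] using h
  have hle := hopt.routeLen_le hperm hhead' hlast'
  have hsplice := plen_splice_lt d X Y hhead hlast hlt
  rw [hR, ← routeLen] at hsplice
  linarith

theorem tsp_optimal_route_misses_an_arc_general [DecidableEq V]
    (d : V → V → ℝ) (depot : V) (P : List V)
    (hPdep : depot ∉ (P.drop 1).dropLast)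
    (hviol : TSPviolating d P)
    (c : List V) (hc : c.Nodup) (hcdep : depot ∉ c)
    (hopt : TSPopt d depot c) :
    (((arcsOf P).filter
        (fun a => a ∈ arcsOf (depot :: c ++ [depot]))).length : ℤ)
      ≤ (P.length : ℤ) - 2 := by
  obtain ⟨v, w, rest, rfl⟩ : ∃ v w rest, P = v :: w :: rest := by
    match P, hviol.two_le_length with
    | v :: w :: rest, _ => exact ⟨v, w, rest, rfl⟩
  have hinner : ∀ b ∈ (w :: rest).dropLast, (depot :: c ++ [depot]).count b ≤ 1 :=
    fun b hb => count_route_le_one hc hcdep fun h => hPdep (by simpa [h] using hb)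
  obtain ⟨a, haP, haR⟩ : ∃ a ∈ arcsOf (v :: w :: rest), a ∉ arcsOf (depot :: c ++ [depot]) := by
    by_contra! hsub
    exact hopt.not_isInfix_of_TSPviolating hviol (cons_cons_isInfix_of_arcsOf_subset hinner hsub)
  have hlt : ((arcsOf (v :: w :: rest)).filter
      (fun a => a ∈ arcsOf (depot :: c ++ [depot]))).length < (arcsOf (v :: w :: rest)).length :=
    List.length_filter_lt_length_iff_exists.2 ⟨a, haP, by simpa using haR⟩
  rw [length_arcsOf] at hlt
  omega

/-- if `P` is a TSP-violating path (distinct nodes, no depot as an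
intermediate node), then any TSP-optimal route contains at most `|A(P)| - 1 = p - 2`
of the arcs of `P`. -/
theorem tsp_optimal_route_misses_an_arc [DecidableEq V]
    (d : V → V → ℝ) (depot : V) (P : List V)
    (hPnd : P.Nodup) (hPdep : depot ∉ (P.drop 1).dropLast)
    (hviol : TSPviolating d P)
    (c : List V) (hc : c.Nodup) (hcdep : depot ∉ c)
    (hopt : TSPopt d depot c) :
    (((arcsOf P).filter
        (fun a => a ∈ arcsOf (depot :: c ++ [depot]))).length : ℤ)
      ≤ (P.length : ℤ) - 2 :=
  tsp_optimal_route_misses_an_arc_general d depot P hPdep hviol c hc hcdep hopt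
end

section
/- Let P = (v_1, ..., v_p) be a path with p-1 arcs, and for each h = 1, ..., p-1 let Δ⁺_h be a set of arcs leaving v_h, not containing (v_h, v_{h+1}), such that in any feasible solution x: (i) x_{v_h, v_{h+1}} + x(Δ⁺_h) ≤ 1 for each h ≥ 2, (ii) x_a = 0 for all a ∈ Δ⁺_1, and (iii) whenever x traverses the partial path (v_1, ..., v_h), no arc of Δ⁺_h is used by x. If x additionally satisfies x(A(P)) ≤ p - 2 (P is never fully traversed), then x satisfies the lifted inequality x(A(P)) + Σ_{h=1}^{p-1} x(Δ⁺_h) ≤ p - 2. -/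
variable {V : Type*}

/-- abstract lifting lemma. If the lifting sets `Δ⁺ₕ` satisfy
(i) `x_{vₕ,vₕ₊₁} + x(Δ⁺ₕ) ≤ 1` for `h ≥ 2`, (ii) `x_a = 0` on `Δ⁺₁`,
(iii) traversal of `(v₁,…,vₕ)` forces `x = 0` on `Δ⁺ₕ`, and `x` never fully
traverses `P`, then the lifted inequality holds. -/
theorem lifted_inequality_valid [DecidableEq V]
    (x : V × V → ℤ) (h01 : ∀ a, x a = 0 ∨ x a = 1)
    (p : ℕ) (hp : 2 ≤ p) (v : ℕ → V)
    (Δ : ℕ → Finset (V × V))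
    (hΔ : ∀ h, 1 ≤ h → h ≤ p - 1 → ∀ a ∈ Δ h, a.1 = v h ∧ a ≠ (v h, v (h + 1)))
    (hdeg : ∀ h, 2 ≤ h → h ≤ p - 1 → x (v h, v (h + 1)) + ∑ a ∈ Δ h, x a ≤ 1)
    (hfirst : ∀ a ∈ Δ 1, x a = 0)
    (htrav : ∀ h, 1 ≤ h → h ≤ p - 1 →
      (∀ i, 1 ≤ i → i ≤ h - 1 → x (v i, v (i + 1)) = 1) → ∀ a ∈ Δ h, x a = 0)
    (hnotfull : ∑ h ∈ Finset.Icc 1 (p - 1), x (v h, v (h + 1)) ≤ (p : ℤ) - 2) :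
    ∑ h ∈ Finset.Icc 1 (p - 1), (x (v h, v (h + 1)) + ∑ a ∈ Δ h, x a)
      ≤ (p : ℤ) - 2 := by
  have hle1 : ∀ a, x a ≤ 1 := fun a => by rcases h01 a with h|h <;> omega
  -- there is a prefix arc with x = 0
  have hex : ∃ k, 1 ≤ k ∧ k ≤ p - 1 ∧ x (v k, v (k+1)) = 0 := by
    by_contra hc
    push_neg at hc
    have hall : ∀ h ∈ Finset.Icc 1 (p-1), x (v h, v (h+1)) = 1 := by
      intro h hh
      simp only [Finset.mem_Icc] at hh
      rcases h01 (v h, v (h+1)) with h0|h0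
      · exact absurd h0 (hc h hh.1 hh.2)
      · exact h0
    rw [Finset.sum_congr rfl hall, Finset.sum_const, Nat.card_Icc] at hnotfull
    rw [nsmul_eq_mul, mul_one] at hnotfull
    omega
  classical
  obtain ⟨hk1, hkp, hk0⟩ := Nat.find_spec hex
  set k := Nat.find hex with hkdef
  have hprev : ∀ i, 1 ≤ i → i < k → x (v i, v (i+1)) = 1 := by
    intro i hi1 hik
    have hm := Nat.find_min hex hik
    rcases h01 (v i, v (i+1)) with h0|h0
    · exact absurd ⟨hi1, by omega, h0⟩ hm
    · exact h0
  have hD : ∀ h, 1 ≤ h → h ≤ k → ∑ a ∈ Δ h, x a = 0 := by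
    intro h h1 hk'
    apply Finset.sum_eq_zero
    intro a ha
    exact htrav h h1 (by omega) (fun i hi1 hi2 => hprev i hi1 (by omega)) a ha
  have hIcc : Finset.Icc 1 (p-1) = Finset.Ioc 0 (p-1) := by
    ext i; simp only [Finset.mem_Icc, Finset.mem_Ioc]; omega
  rw [hIcc]
  rw [← Finset.sum_Ioc_consecutive _ (Nat.zero_le k) hkp]
  have hB1 : ∑ h ∈ Finset.Ioc 0 k, (x (v h, v (h+1)) + ∑ a ∈ Δ h, x a)
      ≤ (k : ℤ) - 1 := by
    have heq : ∀ h ∈ Finset.Ioc 0 k, (x (v h, v (h+1)) + ∑ a ∈ Δ h, x a)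
        = x (v h, v (h+1)) := by
      intro h hh
      simp only [Finset.mem_Ioc] at hh
      rw [hD h (by omega) hh.2]; ring
    rw [Finset.sum_congr rfl heq]
    obtain ⟨k', hk'⟩ : ∃ k', k = k' + 1 := ⟨k - 1, by omega⟩
    rw [hk', Finset.sum_Ioc_succ_top (Nat.zero_le k'), show x (v (k'+1), v (k'+1+1)) = 0 from hk' ▸ hk0, add_zero]
    calc ∑ h ∈ Finset.Ioc 0 k', x (v h, v (h+1))
        ≤ (Finset.Ioc 0 k').card • (1 : ℤ) :=
          Finset.sum_le_card_nsmul _ _ _ (fun h _ => hle1 _)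
      _ = (k' : ℤ) := by simp
      _ ≤ ((k' + 1 : ℕ) : ℤ) - 1 := by push_cast; omega
  have hB2 : ∑ h ∈ Finset.Ioc k (p-1), (x (v h, v (h+1)) + ∑ a ∈ Δ h, x a)
      ≤ ((p : ℤ) - 1) - (k : ℤ) := by
    calc ∑ h ∈ Finset.Ioc k (p-1), (x (v h, v (h+1)) + ∑ a ∈ Δ h, x a)
        ≤ (Finset.Ioc k (p-1)).card • (1 : ℤ) := by
          apply Finset.sum_le_card_nsmul
          intro h hh
          simp only [Finset.mem_Ioc] at hh
          exact hdeg h (by omega) hh.2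
      _ = ((p - 1 - k : ℕ) : ℤ) := by rw [Nat.card_Ioc]; simp
      _ ≤ ((p : ℤ) - 1) - (k : ℤ) := by push_cast; omega
  have : (k : ℤ) - 1 + (((p : ℤ) - 1) - (k : ℤ)) = (p : ℤ) - 2 := by ring
  linarith
end

section
/- The range objective is non-monotonic: there exists an instance (a distance function and a partition of customers into two routes) in which replacing a TSP-optimal route by a TSP-violating route over the same customer set strictly decreases the range |l_1 - l_2|, i.e., the optimal F-CVRP range can be strictly smaller than the optimal F-CVRP-TSP range. -/
variable {V : Type*}

def exD : ℕ → ℕ → ℝ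
  | 0, 1 => 5
  | 1, 0 => 5
  | 0, 2 => 1
  | 2, 3 => 0
  | 3, 0 => 1
  | 0, 3 => 2
  | 3, 2 => 0
  | 2, 0 => 2
  | _, _ => 0

lemma perm_pair {α : Type*} {a b : α} {l : List α} (h : l.Perm [a, b]) :
    l = [a, b] ∨ l = [b, a] := by
  obtain ⟨x, y, rfl⟩ := List.length_eq_two.mp h.length_eq
  have hx : x ∈ [a, b] := h.subset (by simp)
  rcases List.mem_pair.mp hx with rfl | rfl
  · left
    have := List.perm_singleton.mp (h.cons_inv)
    simp [this]
  · right
    have h' : List.Perm (x :: [y]) (x :: [a]) := h.trans (List.Perm.swap x a [])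
    have := List.perm_singleton.mp (h'.cons_inv)
    simp [this]

/-- the range objective is non-monotonic: there is an instance with two
routes in which replacing a TSP-optimal route by a TSP-violating route over the same
customer set strictly decreases the range `|l₁ - l₂|`. -/
theorem range_nonmonotonic :
    ∃ (d : ℕ → ℕ → ℝ) (c₁ c₂ c₂' : List ℕ),
      c₁.Nodup ∧ c₂.Nodup ∧ (∀ u ∈ c₁, u ≠ 0) ∧ (∀ u ∈ c₂, u ≠ 0) ∧
      (∀ u ∈ c₁, u ∉ c₂) ∧ c₂'.Perm c₂ ∧
      TSPopt d 0 c₁ ∧ TSPopt d 0 c₂ ∧ ¬ TSPopt d 0 c₂' ∧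
      |routeLen d 0 c₁ - routeLen d 0 c₂'| <
        |routeLen d 0 c₁ - routeLen d 0 c₂| := by
  refine ⟨exD, [1], [2, 3], [3, 2], by simp, by simp, by simp, by simp, by simp,
    List.Perm.swap 2 3 [], ?_, ?_, ?_, ?_⟩
  · intro c' hc'
    rw [List.perm_singleton.mp hc']
  · intro c' hc'
    rcases perm_pair hc' with rfl | rfl <;>
      norm_num [routeLen, plen, arcsOf, exD]
  · intro h
    have := h [2, 3] (List.Perm.swap 3 2 [])
    norm_num [routeLen, plen, arcsOf, exD] at this
  · norm_num [routeLen, plen, arcsOf, exD]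
end

section
/- If a feasible solution x of F-CVRP-TSP (integer, all routes TSP-optimal, capacities respected) satisfies the degree constraints, then x satisfies simultaneously all TSP-optimality cuts (equation form: x(A(P)) ≤ |A(P)| - 1 for every TSP-violating depot-intermediate-free path P); conversely, any integer solution of the F-CVRP master problem satisfying all these cuts uses only TSP-optimal routes. -/
variable {V : Type*}

/-!
Because the routes partition the customers, every arc other than the depot loop carries flow at
most one. If all arcs of a TSP-violating path carried flow one, consecutive arcs would share an
interior customer, and that customer lies on a single route; so the whole path is a segment of one
route, and replacing the segment by its shorter reordering would shorten the route. Conversely, a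
route that is not TSP-optimal is itself a TSP-violating path, and each of its arcs carries flow at
least one, so it violates its own cut.
-/

namespace List

variable {α : Type*}

theorem exists_eq_cons_append_singleton {l : List α} {a b : α} (hl : 2 ≤ l.length)
    (ha : l.head? = some a) (hb : l.getLast? = some b) : ∃ m, l = a :: m ++ [b] := by
  obtain ⟨l', rfl⟩ := head?_eq_some_iff.mp ha
  obtain ⟨m, b', rfl⟩ := (eq_nil_or_concat l').resolve_left (by rintro rfl; simp at hl)
  rw [concat_eq_append, ← cons_append, getLast?_concat, Option.some_inj] at hb
  exact ⟨m, by rw [hb, concat_eq_append, cons_append]⟩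

theorem cons_cons_isInfix_of_count_le_one [DecidableEq α] {L R : List α} {u v : α}
    (hv : L.count v ≤ 1) (h₁ : [u, v] <:+: L) (h₂ : v :: R <:+: L) : u :: v :: R <:+: L := by
  obtain ⟨s₁, t₁, rfl⟩ := h₁
  obtain ⟨s₂, t₂, h⟩ := h₂
  have h' : s₂ ++ v :: (R ++ t₂) = (s₁ ++ [u]) ++ v :: t₁ := by simpa using h
  rw [← h, show s₂ ++ v :: R ++ t₂ = s₂ ++ v :: (R ++ t₂) by simp, count_append,
    count_cons_self] at hv
  obtain ⟨-, -, rfl⟩ := (append_cons_inj_of_notMem (count_eq_zero.mp (by omega))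
    (count_eq_zero.mp (by omega))).mp h'
  exact ⟨s₁, t₂, by simp⟩

theorem sum_map_le_length_sub_one [DecidableEq α] {f : α → ℤ} {l : List α}
    (hle : ∀ x ∈ l, f x ≤ 1) {a : α} (ha : a ∈ l) (h0 : f a ≤ 0) :
    (l.map f).sum ≤ l.length - 1 := by
  have hrest := sum_le_card_nsmul ((l.erase a).map f) 1
    (by simpa using fun x hx => hle x (mem_of_mem_erase hx))
  rw [length_map, length_erase_of_mem ha, nsmul_one,
    Nat.cast_sub (length_pos_of_mem ha), Nat.cast_one] at hrest
  rw [← sum_map_erase f ha]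
  linarith

theorem count_cons_append_singleton_of_ne [DecidableEq α] {u x : α} (hu : u ≠ x)
    (l : List α) : (x :: l ++ [x]).count u = l.count u := by
  simp [count_append, Ne.symm hu]

end List

section Paths

variable {α : Type*}

theorem arcsOf_cons_cons_s19 (a b : α) (l : List α) :
    arcsOf (a :: b :: l) = (a, b) :: arcsOf (b :: l) := rfl

theorem mem_arcsOf_iff {u v : α} {l : List α} : (u, v) ∈ arcsOf l ↔ [u, v] <:+: l := by
  induction l with
  | nil => simp [arcsOf]
  | cons a l ih =>
    cases l with
    | nil => simp [arcsOf, List.infix_cons_iff]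
    | cons b l =>
      rw [arcsOf_cons_cons_s19, List.mem_cons, ih, List.infix_cons_iff (l₂ := b :: l)]
      simp [and_comm]

theorem fst_mem_dropLast_of_mem_arcsOf {a : α × α} {l : List α} (h : a ∈ arcsOf l) :
    a.1 ∈ l.dropLast := by
  rw [arcsOf, List.zip_eq_zip_take_min] at h
  simpa [List.dropLast_eq_take] using (List.of_mem_zip h).1

theorem ne_loop_of_mem_arcsOf {x : α} {P : List α} (hP : 2 < P.length)
    (hx : x ∉ (P.drop 1).dropLast) {a : α × α} (ha : a ∈ arcsOf P) : a ≠ (x, x) := by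
  rintro rfl
  obtain ⟨u, v, w, R, rfl⟩ : ∃ u v w R, P = u :: v :: w :: R := by
    match P, hP with | u :: v :: w :: R, _ => exact ⟨u, v, w, R, rfl⟩
  rw [arcsOf_cons_cons_s19, List.mem_cons] at ha
  rcases ha with ha | ha
  · simp_all
  · have hmem := fst_mem_dropLast_of_mem_arcsOf ha
    exact hx hmem

theorem count_arcsOf_le_count_left [DecidableEq α] (u v : α) (l : List α) :
    (arcsOf l).count (u, v) ≤ l.count u :=
  calc (arcsOf l).count (u, v) ≤ ((arcsOf l).map Prod.fst).count u :=
      List.count_le_count_map (f := Prod.fst)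
    _ ≤ l.count u := by
      rw [arcsOf, List.zip_eq_zip_take_min, List.map_fst_zip (by simp)]
      exact (List.take_sublist _ _).count_le u

theorem count_arcsOf_le_count_right [DecidableEq α] (u v : α) (l : List α) :
    (arcsOf l).count (u, v) ≤ l.count v :=
  calc (arcsOf l).count (u, v) ≤ ((arcsOf l).map Prod.snd).count v :=
      List.count_le_count_map (f := Prod.snd)
    _ ≤ l.count v := by
      rw [arcsOf, List.map_snd_zip (by simp)]
      exact (List.tail_sublist l).count_le v

theorem arcsOf_append_cons_s19 (s : List α) (x : α) (t : List α) :
    arcsOf (s ++ x :: t) = arcsOf (s ++ [x]) ++ arcsOf (x :: t) := by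
  induction s with
  | nil => rfl
  | cons a s ih =>
    cases s with
    | nil => rfl
    | cons b s =>
      simp only [List.cons_append, arcsOf_cons_cons_s19] at ih ⊢
      rw [ih]

theorem plen_append_cons_s19 (d : α → α → ℝ) (s : List α) (x : α) (t : List α) :
    plen d (s ++ x :: t) = plen d (s ++ [x]) + plen d (x :: t) := by
  rw [plen, arcsOf_append_cons_s19, List.map_append, List.sum_append, plen, plen]

theorem plen_splice_s19 (d : α → α → ℝ) (s t : List α) {l : List α} {a b : α}
    (ha : l.head? = some a) (hb : l.getLast? = some b) :
    plen d (s ++ l ++ t) = plen d (s ++ [a]) + plen d l + plen d (b :: t) := by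
  obtain ⟨l', rfl⟩ := List.head?_eq_some_iff.mp ha
  obtain ⟨m, hm⟩ := List.getLast?_eq_some_iff.mp hb
  have hsuffix : plen d (a :: l' ++ t) = plen d (a :: l') + plen d (b :: t) := by
    rw [hm, List.append_assoc, List.singleton_append, plen_append_cons_s19]
  rw [List.append_assoc, List.cons_append, plen_append_cons_s19, ← List.cons_append, hsuffix,
    add_assoc]

theorem not_tspViolating_of_length_le_two (d : α → α → ℝ) {P : List α} (hP : P.length ≤ 2) :
    ¬ TSPviolating d P := by
  rintro ⟨Q, hperm, hh, hl, hlt⟩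
  suffices Q = P by simp [this] at hlt
  rcases P with _ | ⟨a, _ | ⟨b, _ | ⟨c, R⟩⟩⟩
  · exact hperm.eq_nil
  · exact List.perm_singleton.mp hperm
  · obtain ⟨x, y, rfl⟩ := List.length_eq_two.mp hperm.length_eq
    simp_all
  · simp at hP

theorem TSPviolating.two_lt_length {d : α → α → ℝ} {P : List α} (h : TSPviolating d P) :
    2 < P.length := by
  by_contra! hP
  exact not_tspViolating_of_length_le_two d hP h

theorem TSPviolating.of_isInfix {d : α → α → ℝ} {P L : List α} (h : TSPviolating d P)
    (hPL : P <:+: L) : TSPviolating d L := by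
  have hP : P ≠ [] := List.ne_nil_of_length_pos (by have := h.two_lt_length; omega)
  obtain ⟨Q, hperm, hh, hl, hlt⟩ := h
  obtain ⟨s, t, rfl⟩ := hPL
  refine ⟨s ++ Q ++ t, (hperm.append_left s).append_right t, ?_, ?_, ?_⟩
  · simp [List.head?_append, hh]
  · simp [List.getLast?_append, hl]
  · have ha := List.head?_eq_some_head hP
    have hb := List.getLast?_eq_some_getLast hP
    rw [plen_splice_s19 d s t (hh ▸ ha) (hl ▸ hb), plen_splice_s19 d s t ha hb]
    linarith

theorem tspOpt_iff_not_tspViolating {d : α → α → ℝ} {depot : α} {c : List α} :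
    TSPopt d depot c ↔ ¬ TSPviolating d (depot :: c ++ [depot]) := by
  constructor
  · rintro hopt ⟨Q, hperm, hh, hl, hlt⟩
    obtain ⟨c', rfl⟩ := List.exists_eq_cons_append_singleton (by rw [hperm.length_eq]; simp)
      (by simpa using hh) (by rw [hl, List.getLast?_concat])
    exact (hopt c' (by simpa [List.perm_append_right_iff] using hperm)).not_gt hlt
  · intro h c' hc'
    by_contra! hlt
    exact h ⟨depot :: c' ++ [depot], (hc'.append_right [depot]).cons depot, rfl,
      by rw [List.getLast?_concat, List.getLast?_concat], hlt⟩

end Paths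

def CoversCustomersOnce [DecidableEq V] (depot : V) (routes : List (List V)) : Prop :=
  ∀ u : V, u ≠ depot → (routes.map (fun c => (c.count u : ℤ))).sum = 1

section Routes

variable [DecidableEq V] {depot : V} {routes : List (List V)}

theorem exists_isInfix_of_flow_pos {u v : V} (h : 0 < flow depot routes (u, v)) :
    ∃ c ∈ routes, [u, v] <:+: depot :: c ++ [depot] := by
  obtain ⟨c, hc, hpos⟩ := List.exists_lt_of_sum_lt (fun _ => (0 : ℤ))
    (fun c => ((arcsOf (depot :: c ++ [depot])).count (u, v) : ℤ)) (by simpa [flow] using h)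
  exact ⟨c, hc, mem_arcsOf_iff.mp (List.count_pos_iff.mp (by exact_mod_cast hpos))⟩

theorem one_le_flow_of_mem_arcsOf {c : List V} (hc : c ∈ routes) {a : V × V}
    (ha : a ∈ arcsOf (depot :: c ++ [depot])) : 1 ≤ flow depot routes a :=
  calc (1 : ℤ) ≤ (arcsOf (depot :: c ++ [depot])).count a := by
        exact_mod_cast List.count_pos_iff.mpr ha
    _ ≤ flow depot routes a := List.single_le_sum (by simp) _ (List.mem_map_of_mem hc)

namespace CoversCustomersOnce

theorem count_le_one (h : CoversCustomersOnce depot routes) {c : List V} (hc : c ∈ routes)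
    {u : V} (hu : u ≠ depot) : c.count u ≤ 1 := by
  have hle := List.single_le_sum (by simp) _
    (List.mem_map_of_mem (f := fun c => (c.count u : ℤ)) hc)
  rw [h u hu] at hle
  exact_mod_cast hle

theorem nodup (h : CoversCustomersOnce depot routes) {c : List V} (hc : c ∈ routes)
    (hdep : depot ∉ c) : c.Nodup :=
  List.nodup_iff_count_le_one.mpr fun u =>
    if hu : u = depot then by simp [hu, List.count_eq_zero.mpr hdep] else h.count_le_one hc hu

theorem eq_of_mem_of_mem (h : CoversCustomersOnce depot routes) {v : V} (hv : v ≠ depot)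
    {c₁ c₂ : List V} (hc₁ : c₁ ∈ routes) (hc₂ : c₂ ∈ routes) (hv₁ : v ∈ c₁) (hv₂ : v ∈ c₂) :
    c₁ = c₂ := by
  by_contra hne
  have hsum := ((List.perm_cons_erase hc₁).map fun c => (c.count v : ℤ)).sum_eq
  rw [h v hv, List.map_cons, List.sum_cons] at hsum
  have hle : (c₂.count v : ℤ) ≤ ((routes.erase c₁).map fun c => (c.count v : ℤ)).sum :=
    List.single_le_sum (by simp) _
      (List.mem_map_of_mem ((List.mem_erase_of_ne (Ne.symm hne)).mpr hc₂))
  have h₁ := List.count_pos_iff.mpr hv₁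
  have h₂ := List.count_pos_iff.mpr hv₂
  omega

theorem flow_le_one (h : CoversCustomersOnce depot routes) {u v : V}
    (huv : (u, v) ≠ (depot, depot)) : flow depot routes (u, v) ≤ 1 := by
  obtain ⟨w, hw, hle⟩ : ∃ w ≠ depot, ∀ l : List V, (arcsOf l).count (u, v) ≤ l.count w := by
    by_cases hu : u = depot
    · exact ⟨v, fun hv => huv (by rw [hu, hv]), count_arcsOf_le_count_right u v⟩
    · exact ⟨u, hu, count_arcsOf_le_count_left u v⟩
  calc flow depot routes (u, v) ≤ (routes.map (fun c => (c.count w : ℤ))).sum :=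
        List.sum_le_sum fun c _ => by
          exact_mod_cast (hle _).trans_eq (List.count_cons_append_singleton_of_ne hw c)
    _ = 1 := h w hw

theorem exists_route_isInfix (h : CoversCustomersOnce depot routes) {u v : V} {R : List V}
    (hint : depot ∉ (v :: R).dropLast)
    (hpos : ∀ a ∈ arcsOf (u :: v :: R), 0 < flow depot routes a) :
    ∃ c ∈ routes, u :: v :: R <:+: depot :: c ++ [depot] := by
  induction R generalizing u v with
  | nil => exact exists_isInfix_of_flow_pos (hpos (u, v) List.mem_cons_self)
  | cons w R ih =>
    obtain ⟨c', hc', huv⟩ := exists_isInfix_of_flow_pos (hpos (u, v) List.mem_cons_self)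
    have hv : v ≠ depot := fun hv => hint (by simp [hv])
    obtain ⟨c, hc, hinf⟩ := ih (fun hd => hint (List.mem_cons_of_mem _ hd))
      (fun a ha => hpos a (List.mem_cons_of_mem _ ha))
    have hvc : v ∈ c := by simpa [hv] using hinf.subset List.mem_cons_self
    have hvc' : v ∈ c' := by simpa [hv] using huv.subset (by simp : v ∈ [u, v])
    obtain rfl := h.eq_of_mem_of_mem hv hc' hc hvc' hvc
    refine ⟨c', hc', List.cons_cons_isInfix_of_count_le_one ?_ huv hinf⟩
    rw [List.count_cons_append_singleton_of_ne hv]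
    exact h.count_le_one hc' hv

end CoversCustomersOnce

end Routes

theorem tsp_optimality_cuts_characterize_general [DecidableEq V]
    (d : V → V → ℝ) (depot : V)
    (routes : List (List V))
    (hdep : ∀ c ∈ routes, depot ∉ c)
    (hcover : ∀ u : V, u ≠ depot → (routes.map (fun c => (c.count u : ℤ))).sum = 1) :
    (∀ c ∈ routes, TSPopt d depot c) ↔
    (∀ P : List V, P.dropLast.Nodup → (P.drop 1).Nodup →
      depot ∉ (P.drop 1).dropLast → TSPviolating d P →
      ((arcsOf P).map (flow depot routes)).sum ≤ ((arcsOf P).length : ℤ) - 1) := by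
  have hcover : CoversCustomersOnce depot routes := hcover
  constructor
  · intro hopt P _ _ hint hviol
    by_cases hpos : ∀ a ∈ arcsOf P, 0 < flow depot routes a
    · obtain ⟨u, v, R, rfl⟩ : ∃ u v R, P = u :: v :: R := by
        match P, hviol.two_lt_length with | u :: v :: R, _ => exact ⟨u, v, R, rfl⟩
      obtain ⟨c, hc, hinf⟩ := hcover.exists_route_isInfix hint hpos
      exact absurd (hviol.of_isInfix hinf) (tspOpt_iff_not_tspViolating.mp (hopt c hc))
    · push Not at hpos
      obtain ⟨a, ha, ha0⟩ := hpos
      refine List.sum_map_le_length_sub_one (fun ⟨x, y⟩ hb => hcover.flow_le_one ?_) ha ha0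
      exact ne_loop_of_mem_arcsOf hviol.two_lt_length hint hb
  · intro hcut c hc
    rw [tspOpt_iff_not_tspViolating]
    intro hviol
    have hnd : (depot :: c).Nodup := List.nodup_cons.mpr ⟨hdep c hc, hcover.nodup hc (hdep c hc)⟩
    have hcut_c := hcut _ (by rw [List.dropLast_concat]; exact hnd)
      (List.nodup_append_comm.mp hnd) (by simpa using hdep c hc) hviol
    have hge : ((arcsOf (depot :: c ++ [depot])).length : ℤ) ≤
        ((arcsOf (depot :: c ++ [depot])).map (flow depot routes)).sum := by
      simpa using List.card_nsmul_le_sum _ 1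
        (List.forall_mem_map.mpr fun a ha => one_le_flow_of_mem_arcsOf hc ha)
    omega

/-- an integer solution of the master problem (covering each customer
exactly once with elementary, capacity-feasible routes) uses only TSP-optimal routes
if and only if it satisfies every TSP-optimality cut `x(A(P)) ≤ |A(P)| - 1` for every
TSP-violating path `P` with no depot as intermediate node (here the interior nodes of
`P` are distinct non-depot nodes and only the two endpoints may coincide). -/
theorem tsp_optimality_cuts_characterize [DecidableEq V]
    (d : V → V → ℝ) (depot : V) (dem : V → ℝ) (Qcap : ℝ)
    (routes : List (List V))
    (hnd : ∀ c ∈ routes, c.Nodup) (hdep : ∀ c ∈ routes, depot ∉ c)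
    (hne : ∀ c ∈ routes, c ≠ [])
    (hcap : ∀ c ∈ routes, (c.map dem).sum ≤ Qcap)
    (hcover : ∀ u : V, u ≠ depot → (routes.map (fun c => (c.count u : ℤ))).sum = 1) :
    (∀ c ∈ routes, TSPopt d depot c) ↔
    (∀ P : List V, P.dropLast.Nodup → (P.drop 1).Nodup →
      depot ∉ (P.drop 1).dropLast → TSPviolating d P →
      ((arcsOf P).map (flow depot routes)).sum ≤ ((arcsOf P).length : ℤ) - 1) :=
  tsp_optimality_cuts_characterize_general d depot routes hdep hcover
end
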